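/- For a small symmetric monoidal category C, π_0(NC) is an abelian monoid under the tensor product, and the canonical map λ : π_0(NC) → K_0(N_d C) exhibits K_0(N_d C) as the group completion of the abelian monoid π_0(NC); in particular K_0(N_d C) ≅ K_0(C). -/

import Mathlib

/-!
STATEMENT 1: For a small symmetric monoidal category `C`, `π₀(NC)` is an
abelian monoid under the tensor product, and the canonical map
`λ : π₀(NC) → K₀(N_d C)` exhibits `K₀(N_d C)` as the group completion of the
abelian monoid `π₀(NC)`; in particular `K₀(N_d C) ≅ K₀(C)` (the latter being
by definition the group completion of `π₀(NC)`).

Encoding of the context.  The category `Ω` of finite rooted trees is bundled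
as `TreeCat` (a small category with the tree `η`, the `n`-corollas and their
edge inclusions), a dendroidal set is a presheaf on `Ω`, and `K₀(D)` is the
free abelian group on `D(η)` modulo the corolla relations `x₁ + … + xₙ = x`.
`π₀(NC)` — the set of connected components of the nerve of `C` — is the
quotient of the objects of `C` by the relation `∃ (a ⟶ b)`; its abelian monoid
structure induced by `⊗` is *constructed* below (this is the first assertion
of the statement).  The dendroidal nerve `N_d C` is encoded by the structure
`IsDendroidalNerve`: a dendroidal set whose edges are the objects of `C` and
whose `n`-corolla dendrices are tuples `(c₁, …, cₙ, c, f : c₁ ⊗ … ⊗ cₙ ⟶ c)`,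
with leaf faces `cᵢ` and root face `c`.  That `λ` exhibits `K₀(N_d C)` as the
group completion is expressed by the universal property: `λ` is an additive
monoid map sending `[c]` to the generator `K₀of c`, and every monoid map from
`π₀(NC)` to an abelian group factors uniquely through it.
-/

open CategoryTheory CategoryTheory.Limits Opposite MonoidalCategory

/-- The category `Ω` of finite rooted trees. -/
structure TreeCat where
  Ω : Type
  [instCat : SmallCategory Ω]
  eta : Ω
  corolla : ℕ → Ω
  leaf : ∀ n : ℕ, Fin n → (eta ⟶ corolla n)
  root : ∀ n : ℕ, eta ⟶ corolla n

attribute [instance] TreeCat.instCat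

/-- Dendroidal sets: presheaves on `Ω`. -/
abbrev dSet (T : TreeCat) : Type 1 := T.Ωᵒᵖ ⥤ Type

variable (T : TreeCat)

abbrev dEdges (D : dSet T) : Type := D.obj (op T.eta)

/-- The corolla relations. -/
def corollaRel (D : dSet T) : AddSubgroup (FreeAbelianGroup (dEdges T D)) :=
  AddSubgroup.closure
    {g | ∃ (n : ℕ) (x : D.obj (op (T.corolla n))),
      g = (∑ i : Fin n, FreeAbelianGroup.of (D.map (T.leaf n i).op x)) -
          FreeAbelianGroup.of (D.map (T.root n).op x)}

/-- `K₀` of a dendroidal set. -/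
abbrev K0 (D : dSet T) : Type := FreeAbelianGroup (dEdges T D) ⧸ corollaRel T D

def K0of (D : dSet T) (x : dEdges T D) : K0 T D :=
  QuotientAddGroup.mk (FreeAbelianGroup.of x)

section Pi0

variable (C : Type) [SmallCategory C] [MonoidalCategory C] [SymmetricCategory C]

/-- Two objects of `C` are related if there is a morphism between them; the
quotient by (the equivalence relation generated by) this relation is the set
`π₀(NC)` of connected components of the nerve of `C`. -/
def nerveRel (a b : C) : Prop := Nonempty (a ⟶ b)

/-- `π₀(NC)`: connected components of the nerve of `C`. -/
abbrev NervePi0 : Type := Quot (nerveRel C)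

namespace NervePi0

/-- Addition on `π₀(NC)` induced by the tensor product. -/
instance : Add (NervePi0 C) :=
  ⟨Quot.lift
    (fun a => Quot.lift (fun b => Quot.mk (nerveRel C) (a ⊗ b))
      (fun b b' ⟨g⟩ => Quot.sound ⟨a ◁ g⟩))
    (fun a a' ⟨g⟩ => by
      funext q
      induction q using Quot.ind with
      | _ b => exact Quot.sound ⟨g ▷ b⟩)⟩

instance : Zero (NervePi0 C) := ⟨Quot.mk (nerveRel C) (𝟙_ C)⟩

lemma mk_add_mk (a b : C) :
    (Quot.mk (nerveRel C) a + Quot.mk (nerveRel C) b : NervePi0 C) =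
      Quot.mk (nerveRel C) (a ⊗ b) := rfl

lemma zero_def : (0 : NervePi0 C) = Quot.mk (nerveRel C) (𝟙_ C) := rfl

lemma add_assoc' (x y z : NervePi0 C) : x + y + z = x + (y + z) := by
  induction x using Quot.ind with | _ a =>
  induction y using Quot.ind with | _ b =>
  induction z using Quot.ind with | _ c =>
  rw [mk_add_mk, mk_add_mk, mk_add_mk, mk_add_mk]
  exact Quot.sound ⟨(α_ a b c).hom⟩

lemma zero_add' (x : NervePi0 C) : 0 + x = x := by
  induction x using Quot.ind with | _ a =>
  rw [zero_def, mk_add_mk]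
  exact Quot.sound ⟨(λ_ a).hom⟩

lemma add_zero' (x : NervePi0 C) : x + 0 = x := by
  induction x using Quot.ind with | _ a =>
  rw [zero_def, mk_add_mk]
  exact Quot.sound ⟨(ρ_ a).hom⟩

lemma add_comm' (x y : NervePi0 C) : x + y = y + x := by
  induction x using Quot.ind with | _ a =>
  induction y using Quot.ind with | _ b =>
  rw [mk_add_mk, mk_add_mk]
  exact Quot.sound ⟨(β_ a b).hom⟩

/-- FIRST ASSERTION of the statement: `π₀(NC)` is an abelian monoid under the
tensor product. -/
noncomputable instance : AddCommMonoid (NervePi0 C) where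
  add := (· + ·)
  zero := 0
  add_assoc := add_assoc' C
  zero_add := zero_add' C
  add_zero := add_zero' C
  add_comm := add_comm' C
  nsmul := nsmulRec

end NervePi0

/-- The tensor product `c₁ ⊗ … ⊗ cₙ` of a finite family of objects. -/
def tensorFin {n : ℕ} (c : Fin n → C) : C :=
  (List.ofFn c).foldr (MonoidalCategory.tensorObj) (𝟙_ C)

end Pi0

/-- `D` "is" the dendroidal nerve `N_d C` of the symmetric monoidal category
`C`:  its edges are the objects of `C` and its `n`-corolla dendrices are
tuples `(c₁, …, cₙ; c)` together with a morphism `c₁ ⊗ … ⊗ cₙ ⟶ c` in `C`,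
with leaf faces the `cᵢ` and root face `c`. -/
structure IsDendroidalNerve (C : Type) [SmallCategory C] [MonoidalCategory C]
    (D : dSet T) where
  e0 : dEdges T D ≃ C
  ecor : ∀ n : ℕ, D.obj (op (T.corolla n)) ≃
    Σ (c : Fin n → C) (c' : C), (tensorFin C c ⟶ c')
  leaf_comm : ∀ (n : ℕ) (i : Fin n) (d : D.obj (op (T.corolla n))),
    e0 (D.map (T.leaf n i).op d) = (ecor n d).1 i
  root_comm : ∀ (n : ℕ) (d : D.obj (op (T.corolla n))),
    e0 (D.map (T.root n).op d) = (ecor n d).2.1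

/-! `K₀(D)` is presented by generators `D(η)` and the corolla relations. For `D = N_d C` the
generators are the objects of `C`, and a corolla `c₁ ⊗ ⋯ ⊗ cₙ ⟶ c` imposes `[c₁] + ⋯ + [cₙ] = [c]`.
Its special cases `n = 0, 1, 2` say that `c ↦ [c]` kills `𝟙_ C`, is constant along morphisms and
turns `⊗` into `+`, so it factors through a monoid map `π₀(NC) → K₀(N_d C)`. Conversely, a monoid
map `f : π₀(NC) → G` respects all corolla relations, because
`f [c₁] + ⋯ + f [cₙ] = f [c₁ ⊗ ⋯ ⊗ cₙ] = f [c]`, hence induces `K₀(N_d C) → G`. -/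

namespace K0

variable {T} {D : dSet T}

lemma sum_K0of_leaf_eq_K0of_root (n : ℕ) (x : D.obj (op (T.corolla n))) :
    ∑ i : Fin n, K0of T D (D.map (T.leaf n i).op x) = K0of T D (D.map (T.root n).op x) := by
  rw [← sub_eq_zero]
  change ∑ i : Fin n, QuotientAddGroup.mk' _ (FreeAbelianGroup.of _) -
    QuotientAddGroup.mk' _ (FreeAbelianGroup.of _) = 0
  rw [← map_sum, ← map_sub, QuotientAddGroup.mk'_apply, QuotientAddGroup.eq_zero_iff]
  exact AddSubgroup.subset_closure ⟨n, x, rfl⟩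

variable {G : Type} [AddCommGroup G]

def lift (φ : dEdges T D → G)
    (hφ : ∀ (n : ℕ) (x : D.obj (op (T.corolla n))),
      ∑ i : Fin n, φ (D.map (T.leaf n i).op x) = φ (D.map (T.root n).op x)) :
    K0 T D →+ G :=
  QuotientAddGroup.lift _ (FreeAbelianGroup.lift φ) <| by
    rw [corollaRel, AddSubgroup.closure_le]
    rintro _ ⟨n, x, rfl⟩
    simp [hφ]

@[simp]
lemma lift_K0of (φ : dEdges T D → G)
    (hφ : ∀ (n : ℕ) (x : D.obj (op (T.corolla n))),
      ∑ i : Fin n, φ (D.map (T.leaf n i).op x) = φ (D.map (T.root n).op x))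
    (x : dEdges T D) : lift φ hφ (K0of T D x) = φ x :=
  FreeAbelianGroup.lift_apply_of φ x

lemma hom_ext {f g : K0 T D →+ G} (hfg : ∀ x, f (K0of T D x) = g (K0of T D x)) : f = g :=
  QuotientAddGroup.addMonoidHom_ext _ (FreeAbelianGroup.lift_ext _ _ hfg)

end K0

lemma tensorFin_succ {C : Type} [SmallCategory C] [MonoidalCategory C] {n : ℕ}
    (c : Fin (n + 1) → C) : tensorFin C c = c 0 ⊗ tensorFin C (fun i => c i.succ) := by
  rw [tensorFin, List.ofFn_succ, List.foldr_cons, tensorFin]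

namespace NervePi0

variable {C : Type} [SmallCategory C] [MonoidalCategory C] [SymmetricCategory C]

lemma sum_mk_eq_mk_tensorFin {n : ℕ} (c : Fin n → C) :
    ∑ i : Fin n, Quot.mk (nerveRel C) (c i) =
      (Quot.mk (nerveRel C) (tensorFin C c) : NervePi0 C) := by
  induction n with
  | zero => rfl
  | succ n ih =>
    rw [Fin.sum_univ_succ, ih, mk_add_mk, tensorFin_succ]

end NervePi0

namespace IsDendroidalNerve

variable {T} {C : Type} [SmallCategory C] [MonoidalCategory C] {D : dSet T}
  (h : IsDendroidalNerve T C D)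

lemma sum_K0of_eq_of_hom {n : ℕ} (c : Fin n → C) {c' : C} (g : tensorFin C c ⟶ c') :
    ∑ i : Fin n, K0of T D (h.e0.symm (c i)) = K0of T D (h.e0.symm c') := by
  set x := (h.ecor n).symm ⟨c, c', g⟩
  have leaf_x (i : Fin n) : D.map (T.leaf n i).op x = h.e0.symm (c i) :=
    h.e0.eq_symm_apply.mpr (by rw [h.leaf_comm, Equiv.apply_symm_apply])
  have root_x : D.map (T.root n).op x = h.e0.symm c' :=
    h.e0.eq_symm_apply.mpr (by rw [h.root_comm, Equiv.apply_symm_apply])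
  simpa only [leaf_x, root_x] using K0.sum_K0of_leaf_eq_K0of_root n x

lemma K0of_unit : K0of T D (h.e0.symm (𝟙_ C)) = 0 :=
  (h.sum_K0of_eq_of_hom Fin.elim0 (𝟙 (𝟙_ C))).symm

lemma K0of_eq_of_hom {a b : C} (g : a ⟶ b) :
    K0of T D (h.e0.symm a) = K0of T D (h.e0.symm b) := by
  simpa using h.sum_K0of_eq_of_hom (fun _ : Fin 1 => a) ((ρ_ a).hom ≫ g)

lemma K0of_tensor (a b : C) :
    K0of T D (h.e0.symm (a ⊗ b)) = K0of T D (h.e0.symm a) + K0of T D (h.e0.symm b) := by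
  simpa [Fin.sum_univ_two] using (h.sum_K0of_eq_of_hom ![a, b] (a ◁ (ρ_ b).hom)).symm

variable [SymmetricCategory C]

noncomputable def pi0ToK0 : NervePi0 C →+ K0 T D where
  toFun := Quot.lift (fun c => K0of T D (h.e0.symm c)) fun _ _ ⟨g⟩ => h.K0of_eq_of_hom g
  map_zero' := h.K0of_unit
  map_add' := by
    rintro ⟨a⟩ ⟨b⟩
    exact h.K0of_tensor a b

@[simp]
lemma pi0ToK0_mk (c : C) : h.pi0ToK0 (Quot.mk _ c) = K0of T D (h.e0.symm c) := rfl

variable {G : Type} [AddCommGroup G]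

noncomputable def liftK0 (f : NervePi0 C →+ G) : K0 T D →+ G :=
  K0.lift (fun x => f (Quot.mk _ (h.e0 x))) fun n x => by
    rw [h.root_comm, ← map_sum]
    simp only [h.leaf_comm]
    rw [NervePi0.sum_mk_eq_mk_tensorFin]
    exact congrArg f (Quot.sound ⟨(h.ecor n x).2.2⟩)

lemma liftK0_comp_pi0ToK0 (f : NervePi0 C →+ G) : (h.liftK0 f).comp h.pi0ToK0 = f := by
  ext ⟨c⟩
  simp [liftK0]

lemma hom_ext_of_comp_pi0ToK0 {g g' : K0 T D →+ G}
    (hgg : g.comp h.pi0ToK0 = g'.comp h.pi0ToK0) : g = g' :=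
  K0.hom_ext fun x => by
    simpa using DFunLike.congr_fun hgg (Quot.mk _ (h.e0 x))

end IsDendroidalNerve

/-- the canonical map `λ : π₀(NC) → K₀(N_d C)` is an additive
monoid homomorphism exhibiting `K₀(N_d C)` as the group completion of the
abelian monoid `π₀(NC)`; in particular `K₀(N_d C) ≅ K₀(C)`. -/
theorem K0_dendroidalNerve_is_group_completion_of_pi0
    (C : Type) [SmallCategory C] [MonoidalCategory C] [SymmetricCategory C]
    (D : dSet T) (h : IsDendroidalNerve T C D) :
    ∃ lam : NervePi0 C →+ K0 T D,
      (∀ c : C, lam (Quot.mk (nerveRel C) c) = K0of T D (h.e0.symm c)) ∧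
      ∀ (G : Type) [AddCommGroup G] (f : NervePi0 C →+ G),
        ∃! g : K0 T D →+ G, g.comp lam = f := by
  refine ⟨h.pi0ToK0, h.pi0ToK0_mk, fun G _ f => ⟨h.liftK0 f, h.liftK0_comp_pi0ToK0 f, ?_⟩⟩
  intro g hg
  exact h.hom_ext_of_comp_pi0ToK0 (hg.trans (h.liftK0_comp_pi0ToK0 f).symm)
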